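/- The dynamic programming recursion c(Z(N)) = min over feedback edges (y_b,u_a) covering N of [P_{ab} + Σ over root nodes M of the subtrees of Forest(N,(y_b,u_a)) of c(Z(M))] computes the minimum cost of a feedback edge set covering Tree(N), for every node N of the arborescence (leaves as base case with empty forest). -/

import Mathlib

section
variable {V β : Type*}

/-- The edge relation of an arborescence with root `r` and parent map `par`:
there is an edge from each node to each of its (non-root) children. -/
def treeEdge (par : V → V) (r : V) (a b : V) : Prop := b ≠ r ∧ par b = a

/-- A feedback edge `e`, whose input attaches to the SCC-node `ain e` and
whose output attaches to the SCC-node `aout e`, covers the node `N` of the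
arborescence iff `ain e` is an ancestor of `N` and `aout e` is a descendant
of `N` (so that adding the edge puts `N` on a directed cycle). -/
def covers (par : V → V) (r : V) (ain aout : β → V) (e : β) (N : V) : Prop :=
  Relation.ReflTransGen (treeEdge par r) (ain e) N ∧
    Relation.ReflTransGen (treeEdge par r) N (aout e)

end

open scoped Classical

section
variable {V β : Type*}

/-- The edge set `Z` covers the subtree rooted at `N`. -/
def coversTree (par : V → V) (r : V) (ain aout : β → V)
    (Z : Finset β) (N : V) : Prop :=
  ∀ v : V, Relation.ReflTransGen (treeEdge par r) N v →
    ∃ e ∈ Z, covers par r ain aout e v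

/-- Minimum cost of a feedback edge set (drawn from `F`) covering the subtree
rooted at `N`. -/
noncomputable def minCost (par : V → V) (r : V) (ain aout : β → V)
    (F : Finset β) (c : β → ℝ) (N : V) : ℝ :=
  sInf {cst : ℝ | ∃ Z ⊆ F, coversTree par r ain aout Z N ∧
    cst = ∑ e ∈ Z, c e}

/-- The roots of the subtrees making up `Forest(N, e)`: the topmost nodes of
`Tree(N)` not covered by the feedback edge `e` (their parent is covered). -/
noncomputable def forestRoots [Fintype V] (par : V → V) (r : V)
    (ain aout : β → V) (N : V) (e : β) : Finset V :=
  Finset.univ.filter fun M =>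
    Relation.ReflTransGen (treeEdge par r) N M ∧
      ¬ covers par r ain aout e M ∧ covers par r ain aout e (par M)

end

/-!
Given an optimal cover `Z` of `Tree(N)`, pick `e ∈ Z` covering `N`. For each forest root `M`,
the edges of `Z` whose output lies below `M` cover `Tree(M)`; these families are pairwise
disjoint because the ancestors of a node form a chain, and they avoid `e` because `aout e` lies
below no forest root (`ain e` lies above all of them). Conversely, `e` together with optimal
covers of the trees `Tree(M)` covers `Tree(N)`, since every node of `Tree(N)` not covered by `e`
lies below a forest root. With nonnegative costs these give the two inequalities.
-/

theorem Finset.sum_union_le_add_of_nonneg {ι M : Type*} [DecidableEq ι] [AddCommMonoid M]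
    [PartialOrder M] [IsOrderedAddMonoid M] {f : ι → M} (hf : ∀ i, 0 ≤ f i) (s t : Finset ι) :
    ∑ i ∈ s ∪ t, f i ≤ ∑ i ∈ s, f i + ∑ i ∈ t, f i := by
  rw [← Finset.sum_union_inter]
  exact le_add_of_nonneg_right (Finset.sum_nonneg fun i _ => hf i)

theorem Finset.sum_sup_le_sum_of_nonneg {ι κ M : Type*} [DecidableEq ι] [AddCommMonoid M]
    [PartialOrder M] [IsOrderedAddMonoid M] {f : ι → M} (hf : ∀ i, 0 ≤ f i) (s : Finset κ)
    (t : κ → Finset ι) : ∑ i ∈ s.sup t, f i ≤ ∑ k ∈ s, ∑ i ∈ t k, f i :=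
  Finset.apply_sup_le_sum (f := fun u => ∑ i ∈ u, f i) Finset.sum_empty
    (Finset.sum_union_le_add_of_nonneg hf _ _) s

section FeedbackCover

variable {V β : Type*} {par : V → V} {r : V} {ain aout : β → V} {e : β} {N M M₁ M₂ v : V}
  {F Z : Finset β} {c : β → ℝ}

local notation:50 a:50 " ≼ " b:50 => Relation.ReflTransGen (treeEdge par r) a b

theorem treeEdge_leftUnique : Relator.LeftUnique (treeEdge par r) :=
  fun _ _ _ hac hbc => hac.2.symm.trans hbc.2

theorem eq_or_ne_root_of_reflTransGen_treeEdge (h : N ≼ M) : N = M ∨ M ≠ r := by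
  rcases Relation.ReflTransGen.cases_tail h with rfl | ⟨_, _, hM⟩
  exacts [Or.inl rfl, Or.inr hM.1]

theorem reflTransGen_treeEdge_total (h₁ : M₁ ≼ v) (h₂ : M₂ ≼ v) : M₁ ≼ M₂ ∨ M₂ ≼ M₁ :=
  (Relation.ReflTransGen.total_of_right_unique treeEdge_leftUnique.flip
    (Relation.reflTransGen_swap.mpr h₁) (Relation.reflTransGen_swap.mpr h₂)).symm.imp
      Relation.reflTransGen_swap.mp Relation.reflTransGen_swap.mp

theorem coversTree_filter_reflTransGen_aout (hZ : coversTree par r ain aout Z N) (hNM : N ≼ M) :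
    coversTree par r ain aout (Z.filter fun e' => M ≼ aout e') M := fun v hv =>
  let ⟨e', he'Z, he'v⟩ := hZ v (hNM.trans hv)
  ⟨e', Finset.mem_filter.mpr ⟨he'Z, hv.trans he'v.2⟩, he'v⟩

theorem finite_coverCosts :
    {cst : ℝ | ∃ Z ⊆ F, coversTree par r ain aout Z N ∧ cst = ∑ e ∈ Z, c e}.Finite :=
  ((F.powerset.finite_toSet).image fun Z => ∑ e ∈ Z, c e).subset <| by
    rintro _ ⟨Z, hZF, -, rfl⟩
    exact ⟨Z, Finset.mem_powerset.mpr hZF, rfl⟩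

theorem minCost_le (hZF : Z ⊆ F) (hZ : coversTree par r ain aout Z N) :
    minCost par r ain aout F c N ≤ ∑ e ∈ Z, c e :=
  csInf_le finite_coverCosts.bddBelow ⟨Z, hZF, hZ, rfl⟩

theorem exists_sum_eq_minCost (hF : coversTree par r ain aout F N) :
    ∃ Z ⊆ F, coversTree par r ain aout Z N ∧ ∑ e ∈ Z, c e = minCost par r ain aout F c N := by
  have hne : {cst : ℝ | ∃ Z ⊆ F, coversTree par r ain aout Z N ∧ cst = ∑ e ∈ Z, c e}.Nonempty :=
    ⟨_, F, subset_rfl, hF, rfl⟩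
  obtain ⟨Z, hZF, hZ, hZc⟩ := hne.csInf_mem finite_coverCosts
  exact ⟨Z, hZF, hZ, hZc.symm⟩

variable [Fintype V]

theorem mem_forestRoots :
    M ∈ forestRoots par r ain aout N e ↔
      N ≼ M ∧ ¬ covers par r ain aout e M ∧ covers par r ain aout e (par M) := by
  simp only [forestRoots, Finset.mem_filter, Finset.mem_univ, true_and]

theorem treeEdge_par_of_mem_forestRoots (hN : covers par r ain aout e N)
    (hM : M ∈ forestRoots par r ain aout N e) : treeEdge par r (par M) M := by
  obtain ⟨hNM, hMe, -⟩ := mem_forestRoots.mp hM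
  rcases eq_or_ne_root_of_reflTransGen_treeEdge hNM with rfl | hMr
  exacts [absurd hN hMe, ⟨hMr, rfl⟩]

theorem ain_reflTransGen_of_mem_forestRoots (hN : covers par r ain aout e N)
    (hM : M ∈ forestRoots par r ain aout N e) : ain e ≼ M :=
  (mem_forestRoots.mp hM).2.2.1.tail (treeEdge_par_of_mem_forestRoots hN hM)

theorem not_reflTransGen_aout_of_mem_forestRoots (hN : covers par r ain aout e N)
    (hM : M ∈ forestRoots par r ain aout N e) : ¬ M ≼ aout e :=
  fun hMa => (mem_forestRoots.mp hM).2.1 ⟨ain_reflTransGen_of_mem_forestRoots hN hM, hMa⟩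

theorem exists_mem_forestRoots_reflTransGen (hN : covers par r ain aout e N) (hv : N ≼ v)
    (hve : ¬ covers par r ain aout e v) : ∃ M ∈ forestRoots par r ain aout N e, M ≼ v := by
  induction hv with
  | refl => exact absurd hN hve
  | @tail w v hNw hwv ih =>
    by_cases hwe : covers par r ain aout e w
    · refine ⟨v, mem_forestRoots.mpr ⟨hNw.tail hwv, hve, ?_⟩, .refl⟩
      rwa [hwv.2]
    · obtain ⟨M, hM, hMw⟩ := ih hwe
      exact ⟨M, hM, hMw.tail hwv⟩

theorem not_reflTransGen_of_mem_forestRoots (hN : covers par r ain aout e N)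
    (h₁ : M₁ ∈ forestRoots par r ain aout N e) (h₂ : M₂ ∈ forestRoots par r ain aout N e)
    (hne : M₁ ≠ M₂) : ¬ M₁ ≼ M₂ := by
  intro h₁₂
  rcases Relation.ReflTransGen.cases_tail h₁₂ with rfl | ⟨w, h₁w, hw₂⟩
  · exact hne rfl
  · obtain ⟨-, -, -, hwa⟩ := mem_forestRoots.mp h₂
    rw [hw₂.2] at hwa
    exact (mem_forestRoots.mp h₁).2.1 ⟨ain_reflTransGen_of_mem_forestRoots hN h₁, h₁w.trans hwa⟩

theorem eq_of_mem_forestRoots_of_reflTransGen (hN : covers par r ain aout e N)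
    (h₁ : M₁ ∈ forestRoots par r ain aout N e) (h₂ : M₂ ∈ forestRoots par r ain aout N e)
    (hv₁ : M₁ ≼ v) (hv₂ : M₂ ≼ v) : M₁ = M₂ := by
  by_contra hne
  rcases reflTransGen_treeEdge_total hv₁ hv₂ with h₁₂ | h₂₁
  exacts [not_reflTransGen_of_mem_forestRoots hN h₁ h₂ hne h₁₂,
    not_reflTransGen_of_mem_forestRoots hN h₂ h₁ (Ne.symm hne) h₂₁]

theorem pairwiseDisjoint_filter_forestRoots (hN : covers par r ain aout e N) (Z : Finset β) :
    (forestRoots par r ain aout N e : Set V).PairwiseDisjoint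
      fun M => Z.filter fun e' => M ≼ aout e' := by
  intro M₁ h₁ M₂ h₂ hne
  refine Finset.disjoint_left.mpr fun e' he₁ he₂ => hne ?_
  exact eq_of_mem_forestRoots_of_reflTransGen hN h₁ h₂
    (Finset.mem_filter.mp he₁).2 (Finset.mem_filter.mp he₂).2

theorem coversTree_insert_sup_forestRoots (hN : covers par r ain aout e N) {ZM : V → Finset β}
    (hZM : ∀ M ∈ forestRoots par r ain aout N e, coversTree par r ain aout (ZM M) M) :
    coversTree par r ain aout (insert e ((forestRoots par r ain aout N e).sup ZM)) N := by
  intro v hv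
  by_cases hve : covers par r ain aout e v
  · exact ⟨e, Finset.mem_insert_self _ _, hve⟩
  · obtain ⟨M, hM, hMv⟩ := exists_mem_forestRoots_reflTransGen hN hv hve
    obtain ⟨e', he', he'v⟩ := hZM M hM v hMv
    exact ⟨e', Finset.mem_insert_of_mem (Finset.mem_sup.mpr ⟨M, hM, he'⟩), he'v⟩
theorem minCost_le_add_sum_forestRoots (hc : ∀ e, 0 ≤ c e)
    (hF : ∀ M, coversTree par r ain aout F M) (heF : e ∈ F) (hN : covers par r ain aout e N) :
    minCost par r ain aout F c N ≤
      c e + ∑ M ∈ forestRoots par r ain aout N e, minCost par r ain aout F c M := by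
  choose ZM hZMF hZM hZMc using fun M => exists_sum_eq_minCost (c := c) (hF M)
  set S := forestRoots par r ain aout N e
  calc minCost par r ain aout F c N ≤ ∑ e' ∈ insert e (S.sup ZM), c e' :=
        minCost_le (Finset.insert_subset heF (Finset.sup_le fun M _ => hZMF M))
          (coversTree_insert_sup_forestRoots hN fun M _ => hZM M)
    _ ≤ c e + ∑ e' ∈ S.sup ZM, c e' := by
        simpa only [Finset.insert_eq, Finset.sum_singleton] using
          Finset.sum_union_le_add_of_nonneg hc {e} (S.sup ZM)
    _ ≤ c e + ∑ M ∈ S, ∑ e' ∈ ZM M, c e' := by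
        gcongr
        exact Finset.sum_sup_le_sum_of_nonneg hc S ZM
    _ = c e + ∑ M ∈ S, minCost par r ain aout F c M := by simp only [hZMc]

theorem exists_add_sum_forestRoots_le_minCost (hc : ∀ e, 0 ≤ c e)
    (hF : coversTree par r ain aout F N) :
    ∃ e ∈ F, covers par r ain aout e N ∧
      c e + ∑ M ∈ forestRoots par r ain aout N e, minCost par r ain aout F c M ≤
        minCost par r ain aout F c N := by
  obtain ⟨Z, hZF, hZ, hZc⟩ := exists_sum_eq_minCost (c := c) hF
  obtain ⟨e, heZ, hN⟩ := hZ N .refl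
  refine ⟨e, hZF heZ, hN, ?_⟩
  set S := forestRoots par r ain aout N e
  set ZM := fun M => Z.filter fun e' => M ≼ aout e'
  have hsub : S.biUnion ZM ⊆ Z.erase e := by
    intro e' he'
    obtain ⟨M, hM, he'M⟩ := Finset.mem_biUnion.mp he'
    obtain ⟨he'Z, hMe'⟩ := Finset.mem_filter.mp he'M
    exact Finset.mem_erase.mpr
      ⟨fun h => not_reflTransGen_aout_of_mem_forestRoots hN hM (h ▸ hMe'), he'Z⟩
  calc c e + ∑ M ∈ S, minCost par r ain aout F c M ≤ c e + ∑ M ∈ S, ∑ e' ∈ ZM M, c e' := by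
        gcongr with M hM
        exact minCost_le ((Finset.filter_subset _ _).trans hZF)
          (coversTree_filter_reflTransGen_aout hZ (mem_forestRoots.mp hM).1)
    _ = c e + ∑ e' ∈ S.biUnion ZM, c e' := by
        rw [Finset.sum_biUnion (pairwiseDisjoint_filter_forestRoots hN Z)]
    _ ≤ c e + ∑ e' ∈ Z.erase e, c e' := by
        gcongr
        exact fun e' _ _ => hc e'
    _ = minCost par r ain aout F c N := by rw [Finset.add_sum_erase Z c heZ, hZc]

end FeedbackCover

theorem stmt_16_general {V β : Type*} [Fintype V] (par : V → V) (r : V)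
    (ain aout : β → V)
    (F : Finset β) (c : β → ℝ) (hc : ∀ e, 0 ≤ c e)
    -- feasibility: every node is covered by some feasible feedback edge
    (hfeas : ∀ v : V, ∃ e ∈ F, covers par r ain aout e v) :
    ∀ N : V,
      minCost par r ain aout F c N =
        sInf {cst : ℝ | ∃ e ∈ F, covers par r ain aout e N ∧
          cst = c e + ∑ M ∈ forestRoots par r ain aout N e,
            minCost par r ain aout F c M} := by
  intro N
  have hF : ∀ M, coversTree par r ain aout F M := fun _ v _ => hfeas v
  obtain ⟨e, heF, hN, hle⟩ := exists_add_sum_forestRoots_le_minCost hc (hF N)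
  refine le_antisymm (le_csInf ⟨_, e, heF, hN, rfl⟩ ?_)
    (le_trans (csInf_le ⟨minCost par r ain aout F c N, ?_⟩ ⟨e, heF, hN, rfl⟩) hle)
  all_goals
    rintro _ ⟨e', he'F, he'N, rfl⟩
    exact minCost_le_add_sum_forestRoots hc hF he'F he'N

/-- The dynamic programming recursion
`c(Z(N)) = min over feedback edges e = (y_b,u_a) covering N of
[P_{ab} + Σ over the roots M of the subtrees of Forest(N,e) of c(Z(M))]`
computes the minimum cost of a feedback edge set covering `Tree(N)`, for
every node `N` of the arborescence (for leaves the forest is empty and the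
sum vanishes). -/
theorem stmt_16 {V β : Type*} [Fintype V] (par : V → V) (r : V)
    (hroot : par r = r) (hreach : ∀ v : V, ∃ n : ℕ, par^[n] v = r)
    (ain aout : β → V)
    (F : Finset β) (c : β → ℝ) (hc : ∀ e, 0 ≤ c e)
    -- feasibility: every node is covered by some feasible feedback edge
    (hfeas : ∀ v : V, ∃ e ∈ F, covers par r ain aout e v) :
    ∀ N : V,
      minCost par r ain aout F c N =
        sInf {cst : ℝ | ∃ e ∈ F, covers par r ain aout e N ∧
          cst = c e + ∑ M ∈ forestRoots par r ain aout N e,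
            minCost par r ain aout F c M} :=
  stmt_16_general par r ain aout F c hc hfeas
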